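/- Let p₁(m) = (11 − √(81 − 8m²))/(2m) for 0 < m ≤ 9/(2√2), and h(m) = m/4 + 1/m. Then: (a) p₁(m) ≥ 1 if and only if m ∈ (0, 5/3] ∪ [2, 9/(2√2)]; (b) for every m ∈ (0, 2), h(m) > p₁(m). -/
import Mathlib


/-- `p₁(m) = (11 − √(81 − 8m²))/(2m)`, the smaller root in `n` of `Δ'(0) = 0`. -/
noncomputable def p₁ (m : ℝ) : ℝ := (11 - Real.sqrt (81 - 8 * m ^ 2)) / (2 * m)

/-- `h(m) = m/4 + 1/m`. -/
noncomputable def h (m : ℝ) : ℝ := m / 4 + 1 / m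

/-- (a) For `0 < m ≤ 9/(2√2)`, `p₁(m) ≥ 1` iff `m ∈ (0, 5/3] ∪ [2, 9/(2√2)]`;
(b) for every `m ∈ (0, 2)`, `h(m) > p₁(m)`. -/
theorem p₁_ge_one_iff_and_h_gt_p₁ :
    (∀ m : ℝ, 0 < m → m ≤ 9 / (2 * Real.sqrt 2) →
      (1 ≤ p₁ m ↔
        m ∈ Set.Ioc (0 : ℝ) (5 / 3) ∪ Set.Icc (2 : ℝ) (9 / (2 * Real.sqrt 2)))) ∧
    (∀ m : ℝ, 0 < m → m < 2 → p₁ m < h m) := by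
  have hsqrt2 : (0:ℝ) < Real.sqrt 2 := Real.sqrt_pos.mpr (by norm_num)
  have hsq2 : Real.sqrt 2 ^ 2 = 2 := Real.sq_sqrt (by norm_num)
  constructor
  · intro m hm hm'
    have h9 : m * (2 * Real.sqrt 2) ≤ 9 := by
      rw [← le_div_iff₀ (by positivity)]; exact hm'
    have hmle : 8 * m ^ 2 ≤ 81 := by nlinarith
    set s := Real.sqrt (81 - 8 * m ^ 2) with hs
    have hs_nonneg : 0 ≤ s := Real.sqrt_nonneg _
    have hs_sq : s ^ 2 = 81 - 8 * m ^ 2 := Real.sq_sqrt (by linarith)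
    have hm11 : 0 < 11 - 2 * m := by nlinarith
    have key : 1 ≤ p₁ m ↔ s ≤ 11 - 2 * m := by
      unfold p₁
      rw [le_div_iff₀ (by positivity)]
      constructor <;> intro <;> linarith
    rw [key]
    constructor
    · intro hle
      have hsq : 81 - 8 * m ^ 2 ≤ (11 - 2 * m) ^ 2 := by nlinarith
      rcases le_or_gt m (5 / 3) with hc | hc
      · exact Or.inl ⟨hm, hc⟩
      · refine Or.inr ⟨?_, hm'⟩
        nlinarith
    · intro hmem
      have hfac : 0 ≤ (3 * m - 5) * (m - 2) := by
        rcases hmem with ⟨_, hle⟩ | ⟨hge, _⟩ <;> nlinarith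
      have : s ≤ Real.sqrt ((11 - 2 * m) ^ 2) :=
        Real.sqrt_le_sqrt (by nlinarith)
      rwa [Real.sqrt_sq hm11.le] at this
  · intro m hm hm2
    have hs_nonneg : 0 ≤ Real.sqrt (81 - 8 * m ^ 2) := Real.sqrt_nonneg _
    have hs_sq : Real.sqrt (81 - 8 * m ^ 2) ^ 2 = 81 - 8 * m ^ 2 :=
      Real.sq_sqrt (by nlinarith)
    have hgt : 9 - m ^ 2 / 2 < Real.sqrt (81 - 8 * m ^ 2) := by
      by_contra hle
      push_neg at hle
      nlinarith [mul_self_le_mul_self hs_nonneg hle,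
        mul_pos (mul_pos hm hm) (mul_pos (by linarith : (0:ℝ) < 2 - m) (by linarith : (0:ℝ) < 2 + m))]
    unfold p₁ h
    rw [div_lt_iff₀ (by positivity)]
    have : (m / 4 + 1 / m) * (2 * m) = m ^ 2 / 2 + 2 := by
      field_simp; ring
    rw [this]
    linarith
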